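/- (Diagonal cross-term for convex split.) With the same setup, for a = â and b = b̂, Tr[τ^{-1/4}(ρ^{X_a Y_b M} ⊗ α^{X^{-a}} ⊗ β^{Y^{-b}})τ^{-1/2}(ρ^{X_a Y_b M} ⊗ α^{X^{-a}} ⊗ β^{Y^{-b}})τ^{-1/4}] = 2^{D₂(ρ^{XYM} ‖ α^X ⊗ β^Y ⊗ ρ^M)}. -/

import Mathlib

open Matrix MeasureTheory
open scoped ComplexOrder BigOperators

noncomputable section

variable {n : Type*} [Fintype n] [DecidableEq n]

/-- Frobenius / Schatten-2 norm. -/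
def frob (M : Matrix n n ℂ) : ℝ := Real.sqrt (Mᴴ * M).trace.re

/-- Trace / Schatten-1 norm. -/
def trNorm (M : Matrix n n ℂ) : ℝ :=
  (((Matrix.posSemidef_conjTranspose_mul_self M).1.eigenvectorUnitary : Matrix n n ℂ) *
    Matrix.diagonal (fun i => ((√((Matrix.posSemidef_conjTranspose_mul_self M).1.eigenvalues i) : ℝ) : ℂ)) *
    (star (Matrix.posSemidef_conjTranspose_mul_self M).1.eigenvectorUnitary : Matrix n n ℂ)).trace.re

/-- Real power of a Hermitian matrix via the spectral decomposition, sending zero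
eigenvalues to zero (hence Moore–Penrose pseudoinverse powers for negative exponents);
junk value `0` for non-Hermitian input. -/
def mpow (M : Matrix n n ℂ) (r : ℝ) : Matrix n n ℂ :=
  if h : M.IsHermitian then
    (h.eigenvectorUnitary : Matrix n n ℂ) *
      Matrix.diagonal (fun i =>
        ((if h.eigenvalues i = 0 then (0:ℝ) else h.eigenvalues i ^ r : ℝ) : ℂ)) *
      (h.eigenvectorUnitary : Matrix n n ℂ)ᴴ
  else 0

/-- Operator (Schatten-∞) norm. -/
def opNorm (M : Matrix n n ℂ) : ℝ := ‖(Matrix.toEuclideanLin M).toContinuousLinearMap‖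

/-- Support of a matrix, i.e. its range as a linear map. -/
def supp (M : Matrix n n ℂ) : Submodule ℂ (n → ℂ) := LinearMap.range M.mulVecLin

/-- Rényi-2 divergence (base 2). -/
def D2 (α β : Matrix n n ℂ) : ℝ :=
  2 * Real.logb 2 (frob (mpow β (-(1/4)) * α * mpow β (-(1/4))))

/-- Max (Rényi-∞) divergence (base 2). -/
def Dinf (α β : Matrix n n ℂ) : ℝ :=
  Real.logb 2 (opNorm (mpow β (-(1/2)) * α * mpow β (-(1/2))))

/-- Kronecker / tensor product of square matrices, on the product index type. -/
def kron {m : Type*} (P : Matrix n n ℂ) (Q : Matrix m m ℂ) : Matrix (n × m) (n × m) ℂ :=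
  fun z w => P z.1 w.1 * Q z.2 w.2

variable {X Y M : Type*} [Fintype X] [DecidableEq X] [Fintype Y] [DecidableEq Y]
  [Fintype M] [DecidableEq M]

/-- Marginal on `M` of a state on `X ⊗ Y ⊗ M`. -/
def margM (ρ : Matrix (X × Y × M) (X × Y × M) ℂ) : Matrix M M ℂ :=
  fun m m' => ∑ x, ∑ y, ρ (x, y, m) (x, y, m')

/-- Marginal on `X ⊗ M`. -/
def margXM (ρ : Matrix (X × Y × M) (X × Y × M) ℂ) : Matrix (X × M) (X × M) ℂ :=
  fun z w => ∑ y, ρ (z.1, y, z.2) (w.1, y, w.2)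

/-- Marginal on `Y ⊗ M`. -/
def margYM (ρ : Matrix (X × Y × M) (X × Y × M) ℂ) : Matrix (Y × M) (Y × M) ℂ :=
  fun z w => ∑ x, ρ (x, z.1, z.2) (x, w.1, w.2)

/-- Marginal on `X`. -/
def margX (ρ : Matrix (X × Y × M) (X × Y × M) ℂ) : Matrix X X ℂ :=
  fun x x' => ∑ y, ∑ m, ρ (x, y, m) (x', y, m)

/-- Marginal on `Y`. -/
def margY (ρ : Matrix (X × Y × M) (X × Y × M) ℂ) : Matrix Y Y ℂ :=
  fun y y' => ∑ x, ∑ m, ρ (x, y, m) (x, y', m)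

/-- `ρ^{X_a Y_b M} ⊗ α^{X^{-a}} ⊗ β^{Y^{-b}}` on `X^{⊗A} ⊗ Y^{⊗B} ⊗ M`. -/
def embed (A B : ℕ) (ρ : Matrix (X × Y × M) (X × Y × M) ℂ)
    (α : Matrix X X ℂ) (β : Matrix Y Y ℂ) (a : Fin A) (b : Fin B) :
    Matrix ((Fin A → X) × (Fin B → Y) × M) ((Fin A → X) × (Fin B → Y) × M) ℂ :=
  fun z w => ρ (z.1 a, z.2.1 b, z.2.2) (w.1 a, w.2.1 b, w.2.2) *
    (∏ a' ∈ Finset.univ.erase a, α (z.1 a') (w.1 a')) *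
    (∏ b' ∈ Finset.univ.erase b, β (z.2.1 b') (w.2.1 b'))

/-- Fully decoupled state `τ = α^{⊗A} ⊗ β^{⊗B} ⊗ ρ^M`. -/
def tauCS (A B : ℕ) (ρ : Matrix (X × Y × M) (X × Y × M) ℂ)
    (α : Matrix X X ℂ) (β : Matrix Y Y ℂ) :
    Matrix ((Fin A → X) × (Fin B → Y) × M) ((Fin A → X) × (Fin B → Y) × M) ℂ :=
  fun z w => (∏ a', α (z.1 a') (w.1 a')) * (∏ b', β (z.2.1 b') (w.2.1 b')) *
    margM ρ z.2.2 w.2.2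

/-- `α^X ⊗ β^Y ⊗ ρ^M` on `X ⊗ Y ⊗ M`. -/
def abm (ρ : Matrix (X × Y × M) (X × Y × M) ℂ) (α : Matrix X X ℂ) (β : Matrix Y Y ℂ) :
    Matrix (X × Y × M) (X × Y × M) ℂ :=
  fun z w => α z.1 w.1 * β z.2.1 w.2.1 * margM ρ z.2.2 w.2.2

/-- The convex split state `σ = (AB)⁻¹ ∑_{a,b} ρ^{X_a Y_b M} ⊗ α^{X^{-a}} ⊗ β^{Y^{-b}}`. -/
def csState (A B : ℕ) (ρ : Matrix (X × Y × M) (X × Y × M) ℂ)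
    (α : Matrix X X ℂ) (β : Matrix Y Y ℂ) :
    Matrix ((Fin A → X) × (Fin B → Y) × M) ((Fin A → X) × (Fin B → Y) × M) ℂ :=
  (((A * B : ℕ) : ℂ))⁻¹ • ∑ a : Fin A, ∑ b : Fin B, embed A B ρ α β a b

/-!
Both `τ` and the embedded state act as `α` on every `X`-copy other than `a` and as `β` on every
`Y`-copy other than `b`, and the pseudo-inverse powers of `τ` factor along the same tensor
decomposition. On each of those copies the cross term contributes
`α^{-1/4} α α^{-1/2} α α^{-1/4} = α`, of trace one, so the trace collapses to `Tr[L²]` with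
`L = ω^{-1/4} ρ ω^{-1/4}` and `ω = α ⊗ β ⊗ ρ^M`; since `L` is Hermitian this is `‖L‖₂² = 2^{D₂}`.
The support hypotheses are needed to rule out `L = 0`, where `2^{D₂}` takes the junk value `1`:
they make `ρ` invariant under the support projection `ω⁰` of `ω`, whence `ρ = ω^{1/4} L ω^{1/4}`.
-/

open scoped Kronecker

def pinvRpow (r x : ℝ) : ℝ := if x = 0 then 0 else x ^ r

section PinvRpow

variable {x y : ℝ}

lemma pinvRpow_mul (hx : 0 ≤ x) (hy : 0 ≤ y) (r : ℝ) :
    pinvRpow r (x * y) = pinvRpow r x * pinvRpow r y := by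
  by_cases h : x = 0 ∨ y = 0
  · rcases h with rfl | rfl <;> simp [pinvRpow]
  · simp only [not_or] at h
    simp [pinvRpow, h.1, h.2, Real.mul_rpow hx hy]

lemma pinvRpow_add (hx : 0 ≤ x) (r s : ℝ) :
    pinvRpow (r + s) x = pinvRpow r x * pinvRpow s x := by
  rcases hx.eq_or_lt with rfl | hx
  · simp [pinvRpow]
  · simp [pinvRpow, hx.ne', Real.rpow_add hx]

lemma pinvRpow_one (x : ℝ) : pinvRpow 1 x = x := by
  by_cases hx : x = 0 <;> simp [pinvRpow, hx]

lemma pinvRpow_prod {ι : Type*} (s : Finset ι) {f : ι → ℝ} (hf : ∀ i, 0 ≤ f i) (r : ℝ) :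
    pinvRpow r (∏ i ∈ s, f i) = ∏ i ∈ s, pinvRpow r (f i) := by
  induction s using Finset.cons_induction with
  | empty => simp [pinvRpow]
  | cons i s _ ih =>
    rw [Finset.prod_cons, Finset.prod_cons,
      pinvRpow_mul (hf i) (Finset.prod_nonneg fun j _ => hf j), ih]

end PinvRpow

lemma mul_diagonal_comp_eq {ι κ : Type*} [Fintype ι] [Fintype κ] [DecidableEq ι] [DecidableEq κ]
    {W : Matrix ι κ ℂ} {d : κ → ℝ} {e : ι → ℝ}
    (h : W * diagonal (fun j => (d j : ℂ)) = diagonal (fun i => (e i : ℂ)) * W) (g : ℝ → ℝ) :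
    W * diagonal (fun j => (g (d j) : ℂ)) = diagonal (fun i => (g (e i) : ℂ)) * W := by
  ext i j
  have hij := congrFun (congrFun h i) j
  simp only [mul_diagonal, diagonal_mul] at hij ⊢
  by_cases hW : W i j = 0
  · simp [hW]
  · rw [Complex.ofReal_inj.mp (mul_left_cancel₀ hW (hij.trans (mul_comm _ _))), mul_comm]

section Mpow

variable {A : Matrix n n ℂ}

lemma mpow_eq_cfc (A : Matrix n n ℂ) (r : ℝ) : mpow A r = cfc (pinvRpow r) A := by
  by_cases hA : A.IsHermitian
  · rw [hA.cfc_eq, Matrix.IsHermitian.cfc, Unitary.conjStarAlgAut_apply, mpow, dif_pos hA]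
    rfl
  · rw [mpow, dif_neg hA]
    exact (cfc_apply_of_not_predicate A hA).symm

lemma mpow_isHermitian (A : Matrix n n ℂ) (r : ℝ) : (mpow A r).IsHermitian :=
  mpow_eq_cfc A r ▸ cfc_predicate (pinvRpow r) A

lemma mpow_one (hA : A.IsHermitian) : mpow A 1 = A := by
  rw [mpow_eq_cfc, funext pinvRpow_one]
  exact cfc_id' ℝ A

lemma mpow_mul_mpow (hA : A.PosSemidef) (r s : ℝ) :
    mpow A r * mpow A s = mpow A (r + s) := by
  have hcont (f : ℝ → ℝ) : ContinuousOn f (spectrum ℝ A) :=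
    A.finite_real_spectrum.continuousOn f
  rw [mpow_eq_cfc, mpow_eq_cfc, mpow_eq_cfc, ← cfc_mul _ _ A (hcont _) (hcont _)]
  refine cfc_congr fun x hx => (pinvRpow_add ?_ r s).symm
  obtain ⟨i, rfl⟩ := hA.1.spectrum_real_eq_range_eigenvalues ▸ hx
  exact hA.eigenvalues_nonneg i

lemma mpow_zero_mul_self (hA : A.PosSemidef) : mpow A 0 * A = A := by
  calc mpow A 0 * A = mpow A 0 * mpow A 1 := by rw [mpow_one hA.1]
    _ = A := by rw [mpow_mul_mpow hA, zero_add, mpow_one hA.1]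

lemma mpow_sandwich (hA : A.PosSemidef) :
    mpow A (-(1/4)) * A * mpow A (-(1/2)) * A * mpow A (-(1/4)) = A := by
  calc _ = mpow A (-(1/4)) * mpow A 1 * mpow A (-(1/2)) * mpow A 1 * mpow A (-(1/4)) := by
        rw [mpow_one hA.1]
    _ = A := by
        simp only [mpow_mul_mpow hA]
        norm_num
        exact mpow_one hA.1

lemma mpow_zero_mul_of_supp_le (hA : A.PosSemidef) {K : Matrix n n ℂ} (hK : supp K ≤ supp A) :
    mpow A 0 * K = K := by
  refine Matrix.toLin'.injective (LinearMap.ext fun v => ?_)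
  obtain ⟨u, hu⟩ := hK ⟨v, rfl⟩
  rw [Matrix.mulVecLin_apply, Matrix.mulVecLin_apply] at hu
  rw [Matrix.toLin'_apply, Matrix.toLin'_apply, ← Matrix.mulVec_mulVec, ← hu,
    Matrix.mulVec_mulVec, mpow_zero_mul_self hA]

lemma mpow_zero_isStarProjection (hA : A.PosSemidef) : IsStarProjection (mpow A 0) :=
  ⟨(mpow_mul_mpow hA 0 0).trans (by rw [add_zero]), mpow_isHermitian A 0⟩

lemma mpow_neg_mul_mul_mpow_neg_ne_zero (hA : A.PosSemidef) {ρ : Matrix n n ℂ}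
    (hρ : ρ.IsHermitian) (hsupp : mpow A 0 * ρ = ρ) (hne : ρ ≠ 0) (r : ℝ) :
    mpow A (-r) * ρ * mpow A (-r) ≠ 0 := by
  intro h
  have hsupp' : ρ * mpow A 0 = ρ := by
    simpa only [conjTranspose_mul, hρ.eq, (mpow_isHermitian A 0).eq]
      using congrArg conjTranspose hsupp
  refine hne ?_
  calc ρ = mpow A 0 * ρ * mpow A 0 := by rw [hsupp, hsupp']
    _ = mpow A r * (mpow A (-r) * ρ * mpow A (-r)) * mpow A r := by
        simp only [← mul_assoc, mpow_mul_mpow hA, add_neg_cancel]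
        rw [mul_assoc _ _ (mpow A r), mpow_mul_mpow hA, neg_add_cancel]
    _ = 0 := by rw [h, mul_zero, zero_mul]

lemma Matrix.IsHermitian.eq_conj_diagonal (hA : A.IsHermitian) :
    A = (hA.eigenvectorUnitary : Matrix n n ℂ) * diagonal (fun i => (hA.eigenvalues i : ℂ)) *
      star (hA.eigenvectorUnitary : Matrix n n ℂ) :=
  hA.spectral_theorem.trans (by rw [Unitary.conjStarAlgAut_apply]; rfl)

lemma Matrix.PosSemidef.exists_unitary_conj_diagonal (hA : A.PosSemidef) :
    ∃ U ∈ unitary (Matrix n n ℂ), ∃ d : n → ℝ, (∀ i, 0 ≤ d i) ∧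
      A = U * diagonal (fun i => (d i : ℂ)) * star U :=
  ⟨_, hA.1.eigenvectorUnitary.2, _, hA.eigenvalues_nonneg, hA.1.eq_conj_diagonal⟩

lemma mpow_unitary_conj_diagonal {U : Matrix n n ℂ} (hU : U ∈ unitary (Matrix n n ℂ))
    (d : n → ℝ) (r : ℝ) :
    mpow (U * diagonal (fun i => (d i : ℂ)) * star U) r =
      U * diagonal (fun i => (pinvRpow r (d i) : ℂ)) * star U := by
  set A := U * diagonal (fun i => (d i : ℂ)) * star U
  have hA : A.IsHermitian := isHermitian_mul_mul_conjTranspose U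
    (isHermitian_diagonal_of_self_adjoint _ (by ext i; simp))
  set V : Matrix n n ℂ := ↑hA.eigenvectorUnitary
  have hV : V ∈ unitary (Matrix n n ℂ) := hA.eigenvectorUnitary.2
  -- `star V * U` intertwines the two diagonalizations of `A`, hence any function of them.
  have hVU : (star V * U) * diagonal (fun i => (d i : ℂ)) =
      diagonal (fun i => (hA.eigenvalues i : ℂ)) * (star V * U) := by
    calc _ = star V * A * U := by
          simp only [A, mul_assoc, Unitary.star_mul_self_of_mem hU, mul_one]
      _ = _ := by
          conv_lhs => rw [hA.eq_conj_diagonal]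
          simp only [mul_assoc]
          rw [← mul_assoc (star V), Unitary.star_mul_self_of_mem hV, one_mul]
  have hmpow : mpow A r =
      V * diagonal (fun i => (pinvRpow r (hA.eigenvalues i) : ℂ)) * star V := by
    rw [mpow, dif_pos hA]
    rfl
  calc mpow A r = V * (diagonal (fun i => (pinvRpow r (hA.eigenvalues i) : ℂ)) * (star V * U)) *
        star U := by
        rw [hmpow]
        simp only [mul_assoc, Unitary.mul_star_self_of_mem hU, mul_one]
    _ = _ := by
        rw [← mul_diagonal_comp_eq hVU]
        simp only [← mul_assoc, Unitary.mul_star_self_of_mem hV, one_mul]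

end Mpow

section Kronecker

variable {k l : Type*} [Fintype k] [Fintype l]

lemma conj_diagonal_kronecker_conj_diagonal [DecidableEq k] [DecidableEq l] (U : Matrix k k ℂ)
    (V : Matrix l l ℂ) (d : k → ℂ) (e : l → ℂ) :
    (U * diagonal d * star U) ⊗ₖ (V * diagonal e * star V) =
      (U ⊗ₖ V) * diagonal (fun p => d p.1 * e p.2) * star (U ⊗ₖ V) := by
  simp only [star_eq_conjTranspose, conjTranspose_kronecker, mul_kronecker_mul,
    diagonal_kronecker_diagonal]

lemma mpow_kronecker [DecidableEq k] [DecidableEq l] {P : Matrix k k ℂ} {Q : Matrix l l ℂ}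
    (hP : P.PosSemidef) (hQ : Q.PosSemidef) (r : ℝ) :
    mpow (P ⊗ₖ Q) r = mpow P r ⊗ₖ mpow Q r := by
  obtain ⟨U, hU, d, hd, rfl⟩ := hP.exists_unitary_conj_diagonal
  obtain ⟨V, hV, e, he, rfl⟩ := hQ.exists_unitary_conj_diagonal
  rw [conj_diagonal_kronecker_conj_diagonal, mpow_unitary_conj_diagonal hU,
    mpow_unitary_conj_diagonal hV, conj_diagonal_kronecker_conj_diagonal]
  simp only [← Complex.ofReal_mul, ← pinvRpow_mul (hd _) (he _)]
  exact mpow_unitary_conj_diagonal (kronecker_mem_unitary hU hV) (fun p => d p.1 * e p.2) r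

lemma IsStarProjection.kronecker {P : Matrix k k ℂ} {Q : Matrix l l ℂ}
    (hP : IsStarProjection P) (hQ : IsStarProjection Q) : IsStarProjection (P ⊗ₖ Q) where
  isIdempotentElem := by
    rw [IsIdempotentElem, ← mul_kronecker_mul, hP.isIdempotentElem.eq, hQ.isIdempotentElem.eq]
  isSelfAdjoint := by
    rw [IsSelfAdjoint, star_eq_conjTranspose, conjTranspose_kronecker, ← star_eq_conjTranspose,
      ← star_eq_conjTranspose, hP.isSelfAdjoint.star_eq, hQ.isSelfAdjoint.star_eq]

open scoped MatrixOrder in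
lemma IsStarProjection.mul_eq_self_of_trace_mul_eq [DecidableEq k] {P ρ : Matrix k k ℂ}
    (hP : IsStarProjection P) (hρ : ρ.PosSemidef) (h : (P * ρ).trace = ρ.trace) : P * ρ = ρ := by
  obtain ⟨B, rfl⟩ := CStarAlgebra.nonneg_iff_eq_star_mul_self.mp hρ.nonneg
  -- `Tr((1 - P) B⋆B)` is the squared Frobenius norm of `B (1 - P)`, and it vanishes by `h`.
  have hK := hP.one_sub
  have hBK : B * (1 - P) = 0 := by
    rw [← trace_mul_conjTranspose_self_eq_zero_iff, conjTranspose_mul, ← star_eq_conjTranspose,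
      hK.isSelfAdjoint.star_eq, mul_assoc, ← mul_assoc (1 - P), hK.isIdempotentElem.eq,
      trace_mul_comm, mul_assoc, sub_mul, one_mul, trace_sub, ← star_eq_conjTranspose, h,
      sub_self]
  calc P * (star B * B) = star B * B - star (B * (1 - P)) * B := by
        rw [star_mul, hK.isSelfAdjoint.star_eq, mul_assoc, sub_mul, one_mul, sub_sub_cancel]
    _ = star B * B := by rw [hBK, star_zero, zero_mul, sub_zero]

lemma kronecker_mul_eq_self [DecidableEq k] [DecidableEq l] {P : Matrix k k ℂ}
    {Q : Matrix l l ℂ} {ρ : Matrix (k × l) (k × l) ℂ}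
    (hP : (P ⊗ₖ (1 : Matrix l l ℂ)) * ρ = ρ) (hQ : ((1 : Matrix k k ℂ) ⊗ₖ Q) * ρ = ρ) :
    (P ⊗ₖ Q) * ρ = ρ := by
  rw [← mul_one P, ← one_mul Q, mul_kronecker_mul, mul_assoc, hQ, hP]

end Kronecker

section PartialTrace

variable {R : Type*} [Semiring R] {k l : Type*} [Fintype k] [Fintype l]

def partialTraceLeft (ρ : Matrix (k × l) (k × l) R) : Matrix l l R :=
  ∑ i, ρ.submatrix (Prod.mk i) (Prod.mk i)

def partialTraceRight (ρ : Matrix (k × l) (k × l) R) : Matrix k k R :=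
  ∑ j, ρ.submatrix (·, j) (·, j)

lemma trace_kronecker_one_mul [DecidableEq l] (S : Matrix k k R)
    (ρ : Matrix (k × l) (k × l) R) :
    ((S ⊗ₖ (1 : Matrix l l R)) * ρ).trace = (S * partialTraceRight ρ).trace := by
  simp [trace, partialTraceRight, mul_apply, Matrix.sum_apply, one_apply, Fintype.sum_prod_type,
    Finset.mul_sum]

lemma trace_one_kronecker_mul [DecidableEq k] (S : Matrix l l R)
    (ρ : Matrix (k × l) (k × l) R) :
    (((1 : Matrix k k R) ⊗ₖ S) * ρ).trace = (S * partialTraceLeft ρ).trace := by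
  simp only [trace, diag_apply, mul_apply, kroneckerMap_apply, one_apply, ite_mul, one_mul,
    zero_mul, Fintype.sum_prod_type, Finset.sum_ite_irrel, Finset.sum_const_zero,
    Finset.sum_ite_eq, Finset.mem_univ, if_true, partialTraceLeft, Finset.mul_sum,
    Matrix.sum_apply, submatrix_apply]
  exact Finset.sum_comm

variable [DecidableEq k] [DecidableEq l]

lemma kronecker_one_mul_eq_self {P : Matrix k k ℂ} {ρ : Matrix (k × l) (k × l) ℂ}
    (hP : IsStarProjection P) (hρ : ρ.PosSemidef)
    (h : P * partialTraceRight ρ = partialTraceRight ρ) :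
    (P ⊗ₖ (1 : Matrix l l ℂ)) * ρ = ρ := by
  refine (hP.kronecker (IsStarProjection.one _)).mul_eq_self_of_trace_mul_eq hρ ?_
  conv_rhs => rw [← one_mul ρ, ← one_kronecker_one, trace_kronecker_one_mul]
  rw [trace_kronecker_one_mul, h, one_mul]

lemma one_kronecker_mul_eq_self {P : Matrix l l ℂ} {ρ : Matrix (k × l) (k × l) ℂ}
    (hP : IsStarProjection P) (hρ : ρ.PosSemidef)
    (h : P * partialTraceLeft ρ = partialTraceLeft ρ) :
    ((1 : Matrix k k ℂ) ⊗ₖ P) * ρ = ρ := by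
  refine ((IsStarProjection.one _).kronecker hP).mul_eq_self_of_trace_mul_eq hρ ?_
  conv_rhs => rw [← one_mul ρ, ← one_kronecker_one, trace_one_kronecker_mul]
  rw [trace_one_kronecker_mul, h, one_mul]

end PartialTrace

lemma partialTraceLeft_posSemidef {k l : Type*} [Fintype k] {ρ : Matrix (k × l) (k × l) ℂ}
    (hρ : ρ.PosSemidef) : (partialTraceLeft ρ).PosSemidef :=
  posSemidef_sum _ fun _ _ => hρ.submatrix _

section Marginals

variable {X Y M : Type*}

lemma margX_eq_partialTraceRight [Fintype Y] [Fintype M]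
    (ρ : Matrix (X × Y × M) (X × Y × M) ℂ) : margX ρ = partialTraceRight ρ := by
  ext x x'
  simp [margX, partialTraceRight, Matrix.sum_apply, Fintype.sum_prod_type]

lemma margY_eq_partialTraceRight_partialTraceLeft [Fintype X] [Fintype M]
    (ρ : Matrix (X × Y × M) (X × Y × M) ℂ) : margY ρ = partialTraceRight (partialTraceLeft ρ) := by
  ext y y'
  simp only [margY, partialTraceRight, partialTraceLeft, Matrix.sum_apply, submatrix_apply]
  exact Finset.sum_comm

lemma margM_eq_partialTraceLeft_partialTraceLeft [Fintype X] [Fintype Y]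
    (ρ : Matrix (X × Y × M) (X × Y × M) ℂ) : margM ρ = partialTraceLeft (partialTraceLeft ρ) := by
  ext m m'
  simp only [margM, partialTraceLeft, Matrix.sum_apply, submatrix_apply]
  exact Finset.sum_comm

lemma margM_posSemidef [Fintype X] [Fintype Y] {ρ : Matrix (X × Y × M) (X × Y × M) ℂ}
    (hρ : ρ.PosSemidef) : (margM ρ).PosSemidef :=
  margM_eq_partialTraceLeft_partialTraceLeft ρ ▸
    partialTraceLeft_posSemidef (partialTraceLeft_posSemidef hρ)

lemma abm_eq_kronecker [Fintype X] [Fintype Y] (ρ : Matrix (X × Y × M) (X × Y × M) ℂ)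
    (α : Matrix X X ℂ) (β : Matrix Y Y ℂ) : abm ρ α β = α ⊗ₖ (β ⊗ₖ margM ρ) := by
  ext z w
  simp [abm, mul_assoc]

lemma abm_posSemidef [Fintype X] [Fintype Y] [Fintype M]
    {ρ : Matrix (X × Y × M) (X × Y × M) ℂ} (hρ : ρ.PosSemidef) {α : Matrix X X ℂ}
    (hα : α.PosSemidef) {β : Matrix Y Y ℂ} (hβ : β.PosSemidef) :
    (abm ρ α β).PosSemidef :=
  abm_eq_kronecker ρ α β ▸ hα.kronecker (hβ.kronecker (margM_posSemidef hρ))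

/-- The support projection of `α ⊗ β ⊗ ρ^M` factors into those of `α`, `β` and `ρ^M`, and
each factor fixes `ρ` because it fixes the corresponding marginal. -/
lemma mpow_abm_zero_mul_self [Fintype X] [DecidableEq X] [Fintype Y] [DecidableEq Y] [Fintype M]
    [DecidableEq M] {ρ : Matrix (X × Y × M) (X × Y × M) ℂ} (hρ : ρ.PosSemidef)
    {α : Matrix X X ℂ} (hα : α.PosSemidef) {β : Matrix Y Y ℂ} (hβ : β.PosSemidef)
    (hsX : supp (margX ρ) ≤ supp α) (hsY : supp (margY ρ) ≤ supp β) :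
    mpow (abm ρ α β) 0 * ρ = ρ := by
  have hM := margM_posSemidef hρ
  have hρYM := partialTraceLeft_posSemidef hρ
  rw [abm_eq_kronecker, mpow_kronecker hα (hβ.kronecker hM), mpow_kronecker hβ hM]
  refine kronecker_mul_eq_self ?_ ?_
  · refine kronecker_one_mul_eq_self (mpow_zero_isStarProjection hα) hρ ?_
    rw [← margX_eq_partialTraceRight]
    exact mpow_zero_mul_of_supp_le hα hsX
  refine one_kronecker_mul_eq_self ((mpow_zero_isStarProjection hβ).kronecker
    (mpow_zero_isStarProjection hM)) hρ (kronecker_mul_eq_self ?_ ?_)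
  · refine kronecker_one_mul_eq_self (mpow_zero_isStarProjection hβ) hρYM ?_
    rw [← margY_eq_partialTraceRight_partialTraceLeft]
    exact mpow_zero_mul_of_supp_le hβ hsY
  · refine one_kronecker_mul_eq_self (mpow_zero_isStarProjection hM) hρYM ?_
    rw [← margM_eq_partialTraceLeft_partialTraceLeft]
    exact mpow_zero_mul_self hM

end Marginals

lemma Function.eq_iff_apply_eq_and_forall_mem_erase {ι κ : Type*} [Fintype ι] [DecidableEq ι]
    (i₀ : ι) {f g : ι → κ} : f = g ↔ f i₀ = g i₀ ∧ ∀ i ∈ Finset.univ.erase i₀, f i = g i := by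
  refine ⟨fun h => by simp [h], fun ⟨h₀, h⟩ => funext fun i => ?_⟩
  rcases eq_or_ne i i₀ with rfl | hi
  exacts [h₀, h i (Finset.mem_erase.mpr ⟨hi, Finset.mem_univ i⟩)]

lemma Fintype.sum_pi_mul_prod_erase {R ι κ : Type*} [CommSemiring R] [Fintype ι] [DecidableEq ι]
    [Fintype κ] (a : ι) (F : κ → R) (H : ι → κ → R) :
    ∑ f : ι → κ, F (f a) * ∏ i ∈ Finset.univ.erase a, H i (f i) =
      (∑ x, F x) * ∏ i ∈ Finset.univ.erase a, ∑ x, H i x := by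
  have hsplit (φ : ∀ _ : ι, (κ → R) → R) :
      ∏ i, φ i (Function.update H a F i) = φ a F * ∏ i ∈ Finset.univ.erase a, φ i (H i) := by
    rw [← Finset.mul_prod_erase _ _ (Finset.mem_univ a), Function.update_self]
    congr 1
    exact Finset.prod_congr rfl fun i hi => by
      rw [Function.update_of_ne (Finset.ne_of_mem_erase hi)]
  calc _ = ∑ f : ι → κ, ∏ i, Function.update H a F i (f i) :=
        Finset.sum_congr rfl fun f _ => (hsplit fun i g => g (f i)).symm
    _ = _ := by rw [← Fintype.prod_sum, hsplit fun _ g => ∑ x, g x]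

lemma Fintype.sum_pi_sum_pi_mul_prod_erase {R ι ι' κ κ' : Type*} [CommSemiring R] [Fintype ι]
    [DecidableEq ι] [Fintype ι'] [DecidableEq ι'] [Fintype κ] [Fintype κ'] (a : ι) (b : ι')
    (F : κ → κ' → R) (H : ι → κ → R) (H' : ι' → κ' → R) :
    ∑ f : ι → κ, ∑ g : ι' → κ', F (f a) (g b) * (∏ i ∈ Finset.univ.erase a, H i (f i)) *
        ∏ j ∈ Finset.univ.erase b, H' j (g j) =
      (∑ x, ∑ y, F x y) * (∏ i ∈ Finset.univ.erase a, ∑ x, H i x) *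
        ∏ j ∈ Finset.univ.erase b, ∑ y, H' j y := by
  calc _ = ∑ f : ι → κ, (∑ y, F (f a) y) * (∏ i ∈ Finset.univ.erase a, H i (f i)) *
        ∏ j ∈ Finset.univ.erase b, ∑ y, H' j y := by
        refine Finset.sum_congr rfl fun f _ => ?_
        rw [mul_right_comm, ← Fintype.sum_pi_mul_prod_erase b, Finset.sum_mul]
        exact Finset.sum_congr rfl fun g _ => by ring
    _ = _ := by rw [← Finset.sum_mul, Fintype.sum_pi_mul_prod_erase a (fun x => ∑ y, F x y)]

section Embed

variable {X Y M : Type*} {A B : ℕ} (a : Fin A) (b : Fin B)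

lemma embed_conjTranspose (G : Matrix (X × Y × M) (X × Y × M) ℂ) (P : Matrix X X ℂ)
    (Q : Matrix Y Y ℂ) : (embed A B G P Q a b)ᴴ = embed A B Gᴴ Pᴴ Qᴴ a b := by
  ext z w
  simp only [embed, conjTranspose_apply, star_mul', star_prod]

lemma embed_diagonal [DecidableEq X] [DecidableEq Y] [DecidableEq M] (u : X × Y × M → ℂ)
    (v : X → ℂ) (t : Y → ℂ) :
    embed A B (diagonal u) (diagonal v) (diagonal t) a b =
      diagonal fun z => u (z.1 a, z.2.1 b, z.2.2) * (∏ i ∈ Finset.univ.erase a, v (z.1 i)) *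
        ∏ j ∈ Finset.univ.erase b, t (z.2.1 j) := by
  ext ⟨f, g, m⟩ ⟨f', g', m'⟩
  simp only [embed, diagonal_apply, Finset.prod_ite_zero, Prod.mk.injEq,
    Function.eq_iff_apply_eq_and_forall_mem_erase a (f := f),
    Function.eq_iff_apply_eq_and_forall_mem_erase b (f := g)]
  split_ifs <;> simp_all

lemma embed_one [DecidableEq X] [DecidableEq Y] [DecidableEq M] :
    embed A B (1 : Matrix (X × Y × M) (X × Y × M) ℂ) 1 1 a b = 1 := by
  simpa using embed_diagonal a b (M := M) 1 1 1

variable [Fintype X] [Fintype Y]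

lemma tauCS_eq_embed (ρ : Matrix (X × Y × M) (X × Y × M) ℂ) (α : Matrix X X ℂ)
    (β : Matrix Y Y ℂ) : tauCS A B ρ α β = embed A B (abm ρ α β) α β a b := by
  ext z w
  rw [tauCS, embed, abm,
    ← Finset.mul_prod_erase _ (fun i => α (z.1 i) (w.1 i)) (Finset.mem_univ a),
    ← Finset.mul_prod_erase _ (fun j => β (z.2.1 j) (w.2.1 j)) (Finset.mem_univ b)]
  ring

variable [Fintype M]

lemma embed_mul (G G' : Matrix (X × Y × M) (X × Y × M) ℂ) (P P' : Matrix X X ℂ)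
    (Q Q' : Matrix Y Y ℂ) :
    embed A B G P Q a b * embed A B G' P' Q' a b =
      embed A B (G * G') (P * P') (Q * Q') a b := by
  ext z w
  simp only [embed, mul_apply, Fintype.sum_prod_type]
  rw [← Fintype.sum_pi_sum_pi_mul_prod_erase a b]
  refine Finset.sum_congr rfl fun f _ => Finset.sum_congr rfl fun g _ => ?_
  simp only [Finset.sum_mul, Finset.prod_mul_distrib]
  exact Finset.sum_congr rfl fun m _ => by ring

lemma embed_trace (G : Matrix (X × Y × M) (X × Y × M) ℂ) (P : Matrix X X ℂ)
    (Q : Matrix Y Y ℂ) :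
    (embed A B G P Q a b).trace =
      G.trace * (∏ _i ∈ Finset.univ.erase a, P.trace) * ∏ _j ∈ Finset.univ.erase b, Q.trace := by
  simp only [trace, diag, embed, Fintype.sum_prod_type]
  rw [← Fintype.sum_pi_sum_pi_mul_prod_erase a b]
  refine Finset.sum_congr rfl fun f _ => Finset.sum_congr rfl fun g _ => ?_
  simp only [Finset.sum_mul]

variable [DecidableEq X] [DecidableEq Y] [DecidableEq M]

lemma embed_mem_unitary {U : Matrix (X × Y × M) (X × Y × M) ℂ} {V : Matrix X X ℂ}
    {W : Matrix Y Y ℂ} (hU : U ∈ unitary _) (hV : V ∈ unitary _) (hW : W ∈ unitary _) :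
    embed A B U V W a b ∈ unitary _ := by
  simp only [Unitary.mem_iff, star_eq_conjTranspose, embed_conjTranspose, embed_mul] at *
  rw [hU.1, hU.2, hV.1, hV.2, hW.1, hW.2, embed_one]
  exact ⟨rfl, rfl⟩

lemma mpow_embed {G : Matrix (X × Y × M) (X × Y × M) ℂ} {P : Matrix X X ℂ} {Q : Matrix Y Y ℂ}
    (hG : G.PosSemidef) (hP : P.PosSemidef) (hQ : Q.PosSemidef) (r : ℝ) :
    mpow (embed A B G P Q a b) r = embed A B (mpow G r) (mpow P r) (mpow Q r) a b := by
  obtain ⟨U, hU, d, hd, rfl⟩ := hG.exists_unitary_conj_diagonal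
  obtain ⟨V, hV, e, he, rfl⟩ := hP.exists_unitary_conj_diagonal
  obtain ⟨W, hW, f, hf, rfl⟩ := hQ.exists_unitary_conj_diagonal
  have hconj (u : X × Y × M → ℂ) (v : X → ℂ) (t : Y → ℂ) :
      embed A B (U * diagonal u * star U) (V * diagonal v * star V) (W * diagonal t * star W) a b =
        embed A B U V W a b * diagonal (fun z => u (z.1 a, z.2.1 b, z.2.2) *
          (∏ i ∈ Finset.univ.erase a, v (z.1 i)) * ∏ j ∈ Finset.univ.erase b, t (z.2.1 j)) *
          star (embed A B U V W a b) := by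
    rw [← embed_diagonal]
    simp only [star_eq_conjTranspose, embed_conjTranspose, embed_mul]
  rw [hconj, mpow_unitary_conj_diagonal hU, mpow_unitary_conj_diagonal hV,
    mpow_unitary_conj_diagonal hW, hconj]
  simp only [← Complex.ofReal_mul, ← Complex.ofReal_prod]
  rw [mpow_unitary_conj_diagonal (embed_mem_unitary a b hU hV hW)]
  simp only [pinvRpow_mul (mul_nonneg (hd _) (Finset.prod_nonneg fun _ _ => he _))
    (Finset.prod_nonneg fun _ _ => hf _), pinvRpow_mul (hd _) (Finset.prod_nonneg fun _ _ => he _),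
    pinvRpow_prod _ fun _ => he _, pinvRpow_prod _ fun _ => hf _]

end Embed

lemma two_rpow_D2 {α β : Matrix n n ℂ} (hα : α.IsHermitian)
    (hne : mpow β (-(1/4)) * α * mpow β (-(1/4)) ≠ 0) :
    (((2:ℝ) ^ D2 α β : ℝ) : ℂ) =
      (mpow β (-(1/4)) * α * mpow β (-(1/4)) * (mpow β (-(1/4)) * α * mpow β (-(1/4)))).trace := by
  set L := mpow β (-(1/4)) * α * mpow β (-(1/4))
  have hL : Lᴴ = L := by
    simp only [L, conjTranspose_mul, (mpow_isHermitian β _).eq, hα.eq, mul_assoc]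
  have htr : (Lᴴ * L).trace = (Lᴴ * L).trace.re :=
    Complex.eq_re_of_ofReal_le (r := 0)
      (by simpa using (posSemidef_conjTranspose_mul_self L).trace_nonneg)
  have hpos : 0 < (Lᴴ * L).trace.re := by
    refine lt_of_le_of_ne (Complex.nonneg_iff.mp
      (posSemidef_conjTranspose_mul_self L).trace_nonneg).1 fun h => hne ?_
    rw [← trace_conjTranspose_mul_self_eq_zero_iff, htr, ← h, Complex.ofReal_zero]
  rw [show D2 α β = 2 * Real.logb 2 (frob L) from rfl, frob, mul_comm, Real.rpow_mul zero_le_two,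
    Real.rpow_logb two_pos (by norm_num) (Real.sqrt_pos.mpr hpos), Real.rpow_two,
    Real.sq_sqrt hpos.le, ← htr, hL]

/-- Fully diagonal cross term equals `2^{D₂(ρ^{XYM} ‖ α^X ⊗ β^Y ⊗ ρ^M)}`. -/
theorem cross_term_diag {X Y M : Type*} [Fintype X] [DecidableEq X] [Fintype Y]
    [DecidableEq Y] [Fintype M] [DecidableEq M] {A B : ℕ}
    (ρ : Matrix (X × Y × M) (X × Y × M) ℂ) (hρ : ρ.PosSemidef) (hρ1 : ρ.trace = 1)
    (α : Matrix X X ℂ) (hα : α.PosSemidef) (hα1 : α.trace = 1)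
    (β : Matrix Y Y ℂ) (hβ : β.PosSemidef) (hβ1 : β.trace = 1)
    (hsX : supp (margX ρ) ≤ supp α) (hsY : supp (margY ρ) ≤ supp β)
    (a : Fin A) (b : Fin B) :
    (mpow (tauCS A B ρ α β) (-(1/4)) * embed A B ρ α β a b *
      mpow (tauCS A B ρ α β) (-(1/2)) * embed A B ρ α β a b *
      mpow (tauCS A B ρ α β) (-(1/4))).trace =
      (((2:ℝ) ^ D2 ρ (abm ρ α β) : ℝ) : ℂ) := by
  have hω := abm_posSemidef hρ hα hβ
  set ω := abm ρ α β
  have hτ (r : ℝ) :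
      mpow (tauCS A B ρ α β) r = embed A B (mpow ω r) (mpow α r) (mpow β r) a b := by
    rw [tauCS_eq_embed a b, mpow_embed a b hω hα hβ]
  have hhalf : mpow ω (-(1/2)) = mpow ω (-(1/4)) * mpow ω (-(1/4)) := by
    rw [mpow_mul_mpow hω]
    norm_num
  have hne : mpow ω (-(1/4)) * ρ * mpow ω (-(1/4)) ≠ 0 :=
    mpow_neg_mul_mul_mpow_neg_ne_zero hω hρ.1 (mpow_abm_zero_mul_self hρ hα hβ hsX hsY)
      (fun h => by simp [h] at hρ1) _
  rw [hτ, hτ, embed_mul, embed_mul, embed_mul, embed_mul, embed_trace, mpow_sandwich hα,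
    mpow_sandwich hβ, hα1, hβ1, two_rpow_D2 hρ.1 hne, hhalf]
  simp only [Finset.prod_const_one, mul_one, mul_assoc]
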